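/- arXiv:2504.20773 — 6 statements merged into one kernel-verified Lean document; each statement's English description precedes it below -/
import Mathlib

section
/- Let φ: ℝⁿ → ℝ be a continuous, strongly quasiconvex, nonnegative function with φ(0) = 0, and let C ⊆ ℝⁿ be a closed convex cone. Define the φ-projection P : ℝⁿ → C by Px = argmin {φ(x − y) : y ∈ C}. Then P(x − Px) = 0 for every x ∈ ℝⁿ, i.e., P ∘ (I − P) = 0. -/
/-- For a continuous, strongly quasiconvex, nonnegative function φ with
φ(0)=0 and a closed convex cone C, the φ-projection P satisfies P(x - Px) = 0. -/
theorem stmt_0 {n : ℕ} (φ : (Fin n → ℝ) → ℝ)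
    (hcont : Continuous φ)
    (hsqc : ∀ x y : Fin n → ℝ, x ≠ y → ∀ l : ℝ, 0 < l → l < 1 →
      φ (l • x + (1 - l) • y) < max (φ x) (φ y))
    (hnn : ∀ x, 0 ≤ φ x) (hφ0 : φ 0 = 0)
    (C : Set (Fin n → ℝ)) (hCclosed : IsClosed C) (hC0 : (0 : Fin n → ℝ) ∈ C)
    (hCadd : ∀ x ∈ C, ∀ y ∈ C, x + y ∈ C)
    (hCsmul : ∀ x ∈ C, ∀ t : ℝ, 0 ≤ t → t • x ∈ C)
    (P : (Fin n → ℝ) → (Fin n → ℝ))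
    (hPmem : ∀ x, P x ∈ C)
    (hPmin : ∀ x, ∀ y ∈ C, φ (x - P x) ≤ φ (x - y))
    (hPuniq : ∀ x, ∀ y ∈ C, (∀ z ∈ C, φ (x - y) ≤ φ (x - z)) → y = P x) :
    ∀ x, P (x - P x) = 0 := by
  intro x
  refine (hPuniq (x - P x) 0 hC0 ?_).symm
  intro z hz
  have h := hPmin x (P x + z) (hCadd _ (hPmem x) _ hz)
  have : x - (P x + z) = x - P x - z := by ring
  rw [sub_zero, ← this]
  exact h
end

section
/- Let φ: ℝⁿ → ℝ be a continuous, strongly quasiconvex, nonnegative function with φ(0) = 0 and C ⊆ ℝⁿ a closed convex cone, with φ-projection P onto C. Then the image of I − P equals the kernel of P, i.e., (I − P)(ℝⁿ) = {x ∈ ℝⁿ : Px = 0}. -/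
/-- For the φ-projection P onto a closed convex cone C,
the image of I - P equals the kernel of P. -/
theorem stmt_1 {n : ℕ} (φ : (Fin n → ℝ) → ℝ)
    (hcont : Continuous φ)
    (hsqc : ∀ x y : Fin n → ℝ, x ≠ y → ∀ l : ℝ, 0 < l → l < 1 →
      φ (l • x + (1 - l) • y) < max (φ x) (φ y))
    (hnn : ∀ x, 0 ≤ φ x) (hφ0 : φ 0 = 0)
    (C : Set (Fin n → ℝ)) (hCclosed : IsClosed C) (hC0 : (0 : Fin n → ℝ) ∈ C)
    (hCadd : ∀ x ∈ C, ∀ y ∈ C, x + y ∈ C)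
    (hCsmul : ∀ x ∈ C, ∀ t : ℝ, 0 ≤ t → t • x ∈ C)
    (P : (Fin n → ℝ) → (Fin n → ℝ))
    (hPmem : ∀ x, P x ∈ C)
    (hPmin : ∀ x, ∀ y ∈ C, φ (x - P x) ≤ φ (x - y))
    (hPuniq : ∀ x, ∀ y ∈ C, (∀ z ∈ C, φ (x - y) ≤ φ (x - z)) → y = P x) :
    Set.range (fun x => x - P x) = {x | P x = 0} := by
  ext u
  constructor
  · rintro ⟨x, rfl⟩
    have h0 : (0 : Fin n → ℝ) = P (x - P x) := by
      apply hPuniq _ 0 hC0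
      intro z hz
      have h1 : x - P x - 0 = x - P x := by ring
      have h2 : x - P x - z = x - (P x + z) := by ring
      rw [h1, h2]
      exact hPmin x (P x + z) (hCadd _ (hPmem x) z hz)
    exact h0.symm
  · intro hu
    have h : P u = 0 := hu
    exact ⟨u, by simp [h]⟩
end

section
/- Let C ⊆ ℝⁿ be a convex cone and φ : ℝⁿ → ℝ a strongly quasiconvex function that is positively homogeneous of degree α > 0 (φ(tx) = t^α φ(x) for all t ≥ 0). Then the φ-projection P onto C is positively homogeneous: P(tx) = t·P(x) for every x ∈ ℝⁿ and t ≥ 0. -/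
/-- If C is a convex cone and φ is strongly quasiconvex and positively
homogeneous of degree α > 0, then the φ-projection P onto C is positively homogeneous:
P(t•x) = t•P(x) for all t ≥ 0. -/
theorem stmt_4 {n : ℕ} (φ : (Fin n → ℝ) → ℝ)
    (hsqc : ∀ x y : Fin n → ℝ, x ≠ y → ∀ l : ℝ, 0 < l → l < 1 →
      φ (l • x + (1 - l) • y) < max (φ x) (φ y))
    (α : ℝ) (hα : 0 < α)
    (hhom : ∀ t : ℝ, 0 ≤ t → ∀ x, φ (t • x) = t ^ α * φ x)
    (C : Set (Fin n → ℝ)) (hC0 : (0 : Fin n → ℝ) ∈ C)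
    (hCadd : ∀ x ∈ C, ∀ y ∈ C, x + y ∈ C)
    (hCsmul : ∀ x ∈ C, ∀ t : ℝ, 0 ≤ t → t • x ∈ C)
    (P : (Fin n → ℝ) → (Fin n → ℝ))
    (hPmem : ∀ x, P x ∈ C)
    (hPmin : ∀ x, ∀ y ∈ C, φ (x - P x) ≤ φ (x - y))
    (hPuniq : ∀ x, ∀ y ∈ C, (∀ z ∈ C, φ (x - y) ≤ φ (x - z)) → y = P x) :
    ∀ t : ℝ, 0 ≤ t → ∀ x, P (t • x) = t • P x := by
  have hφ0 : φ 0 = 0 := by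
    have := hhom 0 le_rfl 0
    simpa [Real.zero_rpow hα.ne'] using this
  intro t ht x
  rcases eq_or_lt_of_le ht with h | h
  · -- t = 0 case: show P 0 = 0
    subst h
    simp only [zero_smul]
    -- show P 0 = 0
    by_contra hne0
    -- φ(-P 0) ≥ 0
    have hmin := hPmin 0
    have hnonneg : 0 ≤ φ (-(P 0)) := by
      by_contra hneg
      push_neg at hneg
      have h2 : (2:ℝ) • P 0 ∈ C := hCsmul _ (hPmem 0) 2 (by norm_num)
      have := hmin _ h2
      rw [show (0:Fin n → ℝ) - P 0 = -(P 0) by ring,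
        show (0:Fin n → ℝ) - (2:ℝ) • P 0 = (2:ℝ) • (-(P 0)) by module,
        hhom 2 (by norm_num)] at this
      nlinarith [Real.one_lt_rpow_iff_of_pos (show (0:ℝ) < 2 by norm_num) |>.2 (Or.inl ⟨one_lt_two, hα⟩)]
    -- strong quasiconvexity contradiction with l = 1/2
    have hh : φ ((1/2 : ℝ) • (-(P 0)) + (1 - 1/2 : ℝ) • (0 : Fin n → ℝ))
        < max (φ (-(P 0))) (φ 0) := hsqc _ _ (by simpa using hne0)
        (1/2) (by norm_num) (by norm_num)
    have hmemhalf : (1/2 : ℝ) • P 0 ∈ C := hCsmul _ (hPmem 0) _ (by norm_num)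
    have hle := hmin _ hmemhalf
    rw [show (0:Fin n → ℝ) - P 0 = -(P 0) by ring,
      show (0:Fin n → ℝ) - (1/2:ℝ) • P 0 = (1/2:ℝ) • (-(P 0)) + (1 - 1/2 : ℝ) • (0 : Fin n → ℝ) by module] at hle
    rw [max_eq_left (by linarith [hφ0])] at hh
    linarith
  · -- t > 0 case
    symm
    apply hPuniq (t • x) (t • P x) (hCsmul _ (hPmem x) t ht)
    intro z hz
    have hz' : t⁻¹ • z ∈ C := hCsmul _ hz _ (by positivity)
    have key := hPmin x _ hz'
    have e1 : t • x - t • P x = t • (x - P x) := by module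
    have e2 : t • x - z = t • (x - t⁻¹ • z) := by
      rw [smul_sub, smul_inv_smul₀ h.ne']
    rw [e1, e2, hhom t ht, hhom t ht]
    exact mul_le_mul_of_nonneg_left key (Real.rpow_nonneg ht α)
end

section
/- If P, R : ℝⁿ → ℝⁿ are mutually polar retractions with images 𝒫 = P(ℝⁿ) and ℛ = R(ℝⁿ), then 𝒫 ∩ ℛ = {0} and 𝒫 + ℛ = ℝⁿ. -/
open Pointwise

/-- If P, R are mutually polar retractions with images 𝒫, ℛ, then
𝒫 ∩ ℛ = {0} and 𝒫 + ℛ = ℝⁿ. -/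
theorem stmt_6 {n : ℕ} (P R : (Fin n → ℝ) → (Fin n → ℝ))
    (hPcont : Continuous P) (hP0 : P 0 = 0) (hPidem : ∀ x, P (P x) = P x)
    (hRcont : Continuous R) (hR0 : R 0 = 0) (hRidem : ∀ x, R (R x) = R x)
    (hpolar : ∀ x, P x + R x = x) :
    Set.range P ∩ Set.range R = {0} ∧
    Set.range P + Set.range R = Set.univ := by
  constructor
  · ext x
    simp only [Set.mem_inter_iff, Set.mem_range, Set.mem_singleton_iff]
    constructor
    · rintro ⟨⟨a, ha⟩, ⟨b, hb⟩⟩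
      have hPx : P x = x := by rw [← ha, hPidem]
      have hRx : R x = x := by rw [← hb, hRidem]
      have := hpolar x
      rw [hPx, hRx] at this
      have : x = x + x := this.symm
      have h0 : x + x - x = x - x := by rw [← this]
      simpa using (h0.symm.trans (by abel)).symm
    · rintro rfl
      exact ⟨⟨0, hP0⟩, ⟨0, hR0⟩⟩
  · ext x
    simp only [Set.mem_univ, iff_true, Set.mem_add]
    exact ⟨P x, ⟨x, rfl⟩, R x, ⟨x, rfl⟩, hpolar x⟩
end

section
/- If P, R : ℝⁿ → ℝⁿ are mutually polar retractions, then Px − Rx = 0 if and only if x = 0. -/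
/-- If P, R are mutually polar retractions, then Px - Rx = 0 iff x = 0. -/
theorem stmt_7 {n : ℕ} (P R : (Fin n → ℝ) → (Fin n → ℝ))
    (hPcont : Continuous P) (hP0 : P 0 = 0) (hPidem : ∀ x, P (P x) = P x)
    (hRcont : Continuous R) (hR0 : R 0 = 0) (hRidem : ∀ x, R (R x) = R x)
    (hpolar : ∀ x, P x + R x = x) :
    ∀ x, P x - R x = 0 ↔ x = 0 := by
  intro x
  constructor
  · intro h
    have hPR : P x = R x := sub_eq_zero.mp h
    have hpx : P x + P x = x := by nth_rewrite 2 [hPR]; exact hpolar x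
    have h2 : R (P x) = P x := by rw [hPR]; exact hRidem x
    have h3 : P (P x) + R (P x) = P x := hpolar (P x)
    rw [hPidem x, h2] at h3
    have hP0' : P x = 0 := by
      have := right_eq_add.mp h3.symm
      simpa using this
    rw [← hpx, hP0', add_zero]
  · intro h; subst h; rw [hP0, hR0, sub_zero]
end

section
/- Let σ be a smooth asymmetric norm on ℝⁿ (its unit sphere Σ = {σ = 1} is a smooth strictly convex surface), let H₋ = {x : ⟨a,x⟩ ≤ 0} be a closed halfspace with unit normal a, and let P be the σ-projection onto H₋ with R = I − P. Then R(ℝⁿ) = ker(P) is a ray {t·x₀ : t ≥ 0} issuing from 0, where x₀ is the unique point with σ(x₀) = 1 that projects to 0. In particular P and R are mutually polar retractions onto convex cones. -/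
open RealInnerProductSpace

/-- For a smooth strictly convex asymmetric norm σ and the halfspace
H₋ = {x : ⟨a,x⟩ ≤ 0} (‖a‖ = 1), the kernel of the σ-projection P onto H₋ is a ray
{t•x₀ : t ≥ 0}, where x₀ is the unique point with σ(x₀) = 1 projecting to 0; and
P, R = I - P are mutually polar retractions onto convex cones. -/
theorem stmt_16 {n : ℕ} (σ : EuclideanSpace ℝ (Fin n) → ℝ)
    (hσpos : ∀ x : EuclideanSpace ℝ (Fin n), x ≠ 0 → 0 < σ x) (hσ0 : σ 0 = 0)
    (hσh : ∀ t : ℝ, 0 ≤ t → ∀ x, σ (t • x) = t * σ x)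
    (hσt : ∀ x y, σ (x + y) ≤ σ x + σ y)
    (hσstrict : ∀ x y : EuclideanSpace ℝ (Fin n), x ≠ y → σ x = 1 → σ y = 1 →
      ∀ t : ℝ, 0 < t → t < 1 → σ (t • x + (1 - t) • y) < 1)
    (hσsmooth : ∀ x : EuclideanSpace ℝ (Fin n), x ≠ 0 → DifferentiableAt ℝ σ x)
    (a : EuclideanSpace ℝ (Fin n)) (ha : ‖a‖ = 1)
    (H : Set (EuclideanSpace ℝ (Fin n))) (hH : H = {x | ⟪a, x⟫ ≤ 0})
    (P R : EuclideanSpace ℝ (Fin n) → EuclideanSpace ℝ (Fin n))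
    (hPmem : ∀ x, P x ∈ H) (hPmin : ∀ x, ∀ y ∈ H, σ (x - P x) ≤ σ (x - y))
    (hPuniq : ∀ x, ∀ y ∈ H, (∀ z ∈ H, σ (x - y) ≤ σ (x - z)) → y = P x)
    (hR : ∀ x, R x = x - P x) :
    (∃ x₀, σ x₀ = 1 ∧ P x₀ = 0 ∧
      (∀ y, σ y = 1 → P y = 0 → y = x₀) ∧
      {x | P x = 0} = {y | ∃ t : ℝ, 0 ≤ t ∧ y = t • x₀}) ∧
    Set.range R = {x | P x = 0} ∧
    (Continuous P ∧ P 0 = 0 ∧ ∀ x, P (P x) = P x) ∧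
    (Continuous R ∧ R 0 = 0 ∧ ∀ x, R (R x) = R x) ∧
    (∀ x, P x + R x = x) ∧
    Convex ℝ (Set.range P) ∧ Convex ℝ (Set.range R) := by
  have hσnn : ∀ x, 0 ≤ σ x := by
    intro x
    by_cases hx : x = 0
    · simp [hx, hσ0]
    · exact (hσpos x hx).le
  have hmemH : ∀ x, x ∈ H ↔ ⟪a, x⟫ ≤ 0 := by intro x; rw [hH]; rfl
  have haa : ⟪a, a⟫ = 1 := by
    rw [real_inner_self_eq_norm_sq, ha]; norm_num
  -- d₁ := a - P a : the minimizer of σ on the halfspace {⟪a,d⟫ ≥ 1}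
  set d₁ : EuclideanSpace ℝ (Fin n) := a - P a with hd₁
  have hmin : ∀ d, 1 ≤ ⟪a, d⟫ → σ d₁ ≤ σ d := by
    intro d hd
    have hmem : a - d ∈ H := by
      rw [hmemH, inner_sub_right, haa]; linarith
    have := hPmin a (a - d) hmem
    simpa using this
  have hs1 : (1 : ℝ) ≤ ⟪a, d₁⟫ := by
    have := (hmemH (P a)).mp (hPmem a)
    rw [hd₁, inner_sub_right, haa]; linarith
  have hd₁ne : d₁ ≠ 0 := by
    intro h
    rw [h] at hs1; simp at hs1; linarith
  have hσd₁ : 0 < σ d₁ := hσpos _ hd₁ne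
  have hinner_d₁ : ⟪a, d₁⟫ = 1 := by
    set s := ⟪a, d₁⟫ with hsdef
    have hspos : 0 < s := by linarith
    have h1 : σ d₁ ≤ σ (s⁻¹ • d₁) := by
      apply hmin
      rw [real_inner_smul_right]
      rw [inv_mul_cancel₀ hspos.ne']
    rw [hσh s⁻¹ (by positivity) d₁] at h1
    have hs_le : s ≤ 1 := by
      nlinarith [mul_le_mul_of_nonneg_left h1 hspos.le,
        mul_inv_cancel₀ hspos.ne']
    linarith
  -- the master formula for P
  have hP : ∀ x, P x = x - max ⟪a, x⟫ 0 • d₁ := by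
    intro x
    rcases le_or_gt ⟪a, x⟫ 0 with hc | hc
    · rw [max_eq_right hc, zero_smul, sub_zero]
      refine (hPuniq x x ((hmemH x).mpr hc) ?_).symm
      intro z hz
      simpa [hσ0] using hσnn (x - z)
    · rw [max_eq_left hc.le]
      refine (hPuniq x (x - ⟪a, x⟫ • d₁) ?_ ?_).symm
      · rw [hmemH, inner_sub_right, real_inner_smul_right, hinner_d₁]
        ring_nf
        simp
      · intro z hz
        have h1 : x - (x - ⟪a, x⟫ • d₁) = ⟪a, x⟫ • d₁ := by abel
        rw [h1, hσh _ hc.le]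
        -- estimate σ (x - z) from below
        set s := ⟪a, x - z⟫ with hs
        have hzle : ⟪a, z⟫ ≤ 0 := (hmemH z).mp hz
        have hsge : ⟪a, x⟫ ≤ s := by
          rw [hs, inner_sub_right]; linarith
        have hspos : 0 < s := lt_of_lt_of_le hc hsge
        have h2 : σ d₁ ≤ σ (s⁻¹ • (x - z)) := by
          apply hmin
          rw [real_inner_smul_right, ← hs, inv_mul_cancel₀ hspos.ne']
        rw [hσh s⁻¹ (by positivity)] at h2
        have h3 : s * σ d₁ ≤ σ (x - z) := by
          have h4 := mul_le_mul_of_nonneg_left h2 hspos.le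
          rwa [← mul_assoc, mul_inv_cancel₀ hspos.ne', one_mul] at h4
        nlinarith
  -- x₀
  set x₀ : EuclideanSpace ℝ (Fin n) := (σ d₁)⁻¹ • d₁ with hx₀
  have hσx₀ : σ x₀ = 1 := by
    rw [hx₀, hσh _ (by positivity), inv_mul_cancel₀ hσd₁.ne']
  have hd₁x₀ : σ d₁ • x₀ = d₁ := by
    rw [hx₀, smul_smul, mul_inv_cancel₀ hσd₁.ne', one_smul]
  have hinner_x₀ : ⟪a, x₀⟫ = (σ d₁)⁻¹ := by
    rw [hx₀, real_inner_smul_right, hinner_d₁, mul_one]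
  -- the ray projects to 0
  have hray : ∀ t : ℝ, 0 ≤ t → P (t • x₀) = 0 := by
    intro t ht
    rw [hP, real_inner_smul_right, hinner_x₀]
    have h1 : max (t * (σ d₁)⁻¹) 0 = t * (σ d₁)⁻¹ :=
      max_eq_left (by positivity)
    rw [h1, hx₀, smul_smul]
    exact sub_self _
  -- kernel of P is the ray
  have hker : {x | P x = 0} = {y | ∃ t : ℝ, 0 ≤ t ∧ y = t • x₀} := by
    ext x
    constructor
    · intro hx
      have hx' : P x = 0 := hx
      rw [hP, sub_eq_zero] at hx'
      refine ⟨max ⟪a, x⟫ 0 * σ d₁, by positivity, ?_⟩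
      rw [mul_smul, hd₁x₀]
      exact hx'
    · rintro ⟨t, ht, rfl⟩
      exact hray t ht
  -- P fixes H
  have hPfix : ∀ x ∈ H, P x = x := by
    intro x hx
    rw [hP, max_eq_right ((hmemH x).mp hx), zero_smul, sub_zero]
  -- R formula
  have hR' : ∀ x, R x = max ⟪a, x⟫ 0 • d₁ := by
    intro x
    rw [hR, hP]
    abel
  have hPR0 : ∀ x, P (R x) = 0 := by
    intro x
    have h5 : (max ⟪a, x⟫ 0) • d₁ = (max ⟪a, x⟫ 0 * σ d₁) • x₀ := by
      rw [mul_smul, hd₁x₀]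
    rw [hR' x, h5]
    exact hray _ (by positivity)
  refine ⟨⟨x₀, hσx₀, ?_, ?_, hker⟩, ?_, ⟨?_, ?_, ?_⟩, ⟨?_, ?_, ?_⟩, ?_, ?_, ?_⟩
  · -- P x₀ = 0
    have h6 := hray 1 zero_le_one
    rwa [one_smul] at h6
  · -- uniqueness
    intro y hy1 hy2
    have : y ∈ {x | P x = 0} := hy2
    rw [hker] at this
    obtain ⟨t, ht, rfl⟩ := this
    have : σ (t • x₀) = t := by rw [hσh t ht, hσx₀, mul_one]
    rw [hy1] at this
    rw [← this, one_smul]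
  · -- range R = ker P
    ext x
    constructor
    · rintro ⟨w, rfl⟩
      exact hPR0 w
    · intro hx
      exact ⟨x, by rw [hR, hx, sub_zero]⟩
  · -- continuity of P
    have : P = fun x => x - max ⟪a, x⟫ 0 • d₁ := funext hP
    rw [this]
    exact continuous_id.sub
      (((continuous_const.inner continuous_id).max continuous_const).fun_smul
        continuous_const)
  · -- P 0 = 0
    rw [hP]; simp
  · -- P idempotent
    intro x
    exact hPfix (P x) (hPmem x)
  · -- continuity of R
    have : R = fun x => max ⟪a, x⟫ 0 • d₁ := funext hR'
    rw [this]
    exact ((continuous_const.inner continuous_id).max continuous_const).fun_smul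
      continuous_const
  · -- R 0 = 0
    rw [hR']; simp
  · -- R idempotent
    intro x
    rw [hR (R x), hPR0 x, sub_zero]
  · -- P + R = I
    intro x
    rw [hR]; abel
  · -- range P convex: range P = H
    have hrange : Set.range P = H := by
      ext x
      constructor
      · rintro ⟨w, rfl⟩; exact hPmem w
      · intro hx; exact ⟨x, hPfix x hx⟩
    rw [hrange, hH]
    exact convex_halfSpace_le ⟨fun x y => inner_add_right a x y,
      fun c x => real_inner_smul_right a x c⟩ 0
  · -- range R convex: range R = ray
    have hrange : Set.range R = {y | ∃ t : ℝ, 0 ≤ t ∧ y = t • x₀} := by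
      rw [← hker]
      ext x
      constructor
      · rintro ⟨w, rfl⟩; exact hPR0 w
      · intro hx; exact ⟨x, by rw [hR, hx, sub_zero]⟩
    rw [hrange]
    rintro y ⟨t₁, ht₁, rfl⟩ z ⟨t₂, ht₂, rfl⟩ α β hα hβ hαβ
    exact ⟨α * t₁ + β * t₂, by positivity, by
      simp [smul_smul, add_smul]⟩
end
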